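/- arXiv:2208.14899 — 3 statements merged into one kernel-verified Lean document; each statement's English description precedes it below -/
import Mathlib

section
/- Let Ω = [0,1] with Lebesgue measure μ, fix 0 < c ≤ 1, and let n be the unique positive integer with 1/(n+1) < c ≤ 1/n. Set r = 1 − nc, q_k = (n−k+1)/(n(n+1)) for k = 1,…,n, and a = Σ_{k=1}^n q_k (𝟙_{[(k−1)c, kc]} + 𝟙_{[1−kc, 1−(k−1)c]}). Then for almost every x ∈ [0,1], a(x) = 1/(n+1) if x lies in [0,r) ∪ (c, c+r) ∪ (2c, 2c+r) ∪ ⋯ ∪ (nc, 1], and a(x) = 1/n otherwise; moreover for every t ∈ [0, 1−c], ∫_t^{t+c} 1/a(x) dx = 1. -/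
/-!
On each period `(m c, (m + 1) c)` the point `x` meets exactly one interval of each family: the
`(m + 1)`-st of the first one, and of the reflected one the `(n - m + 1)`-st if the residue
`x - m c` is below `r = 1 - n c`, the `(n - m)`-th otherwise. The weights `q_k` being affine in
`k`, the two weights add up to `1/(n+1)` resp. `1/n`. So `1/a = n + 𝟙{residue < r}` almost
everywhere, a `c`-periodic function whose integral over any window of length `c` is `n c + r = 1`.
-/

open MeasureTheory Set

lemma mem_Icc_sub_one_mul_iff {c x : ℝ} (hc : 0 < c) {m : ℕ} (h1 : m * c < x)
    (h2 : x < (m + 1) * c) (k : ℕ) :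
    x ∈ Icc (((k : ℝ) - 1) * c) (k * c) ↔ k = m + 1 := by
  constructor
  · rintro ⟨hlo, hhi⟩
    have hmk : (m : ℝ) < k := lt_of_mul_lt_mul_right (h1.trans_le hhi) hc.le
    have hkm : (k : ℝ) - 1 < m + 1 := lt_of_mul_lt_mul_right (hlo.trans_lt h2) hc.le
    have : m < k := by exact_mod_cast hmk
    have : k < m + 2 := by exact_mod_cast (by linarith : (k : ℝ) < m + 2)
    omega
  · rintro rfl
    push_cast
    constructor <;> linarith

noncomputable def stepSum (c : ℝ) (n : ℕ) (q : ℕ → ℝ) (y : ℝ) : ℝ :=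
  ∑ k ∈ Finset.Icc 1 n, q k * (Icc (((k : ℝ) - 1) * c) (k * c)).indicator 1 y

-- Letting `q (n + 1) = 0` covers the last period `m = n`, which meets no interval of the family.
lemma stepSum_eq {c y : ℝ} (hc : 0 < c) {n m : ℕ} {q : ℕ → ℝ} (hq : q (n + 1) = 0)
    (hm : m ≤ n) (h1 : m * c < y) (h2 : y < (m + 1) * c) :
    stepSum c n q y = q (m + 1) := by
  simp only [stepSum, indicator_apply, mem_Icc_sub_one_mul_iff hc h1 h2, Pi.one_apply,
    mul_ite, mul_one, mul_zero, Finset.sum_ite_eq', Finset.mem_Icc]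
  split_ifs with h
  · rfl
  · obtain rfl : m = n := by omega
    exact hq.symm

lemma sum_indicator_add_reflect_eq_stepSum (c : ℝ) (n : ℕ) (q : ℕ → ℝ) (x : ℝ) :
    ∑ k ∈ Finset.Icc 1 n, q k *
      ((Icc (((k : ℝ) - 1) * c) (k * c)).indicator 1 x +
       (Icc (1 - (k : ℝ) * c) (1 - ((k : ℝ) - 1) * c)).indicator 1 x) =
    stepSum c n q x + stepSum c n q (1 - x) := by
  have hmem (k : ℕ) : x ∈ Icc (1 - (k : ℝ) * c) (1 - ((k : ℝ) - 1) * c) ↔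
      1 - x ∈ Icc (((k : ℝ) - 1) * c) (k * c) := by
    simp only [mem_Icc]; constructor <;> rintro ⟨h1, h2⟩ <;> constructor <;> linarith
  simp only [stepSum, indicator_apply, hmem, Pi.one_apply, mul_add, Finset.sum_add_distrib]

lemma natFloor_div_eq {c x : ℝ} (hc : 0 < c) {m : ℕ} (h1 : m * c ≤ x) (h2 : x < (m + 1) * c) :
    ⌊x / c⌋₊ = m :=
  (Nat.floor_eq_iff (div_nonneg ((by positivity : (0 : ℝ) ≤ m * c).trans h1) hc.le)).2
    ⟨(le_div_iff₀ hc).2 h1, (div_lt_iff₀ hc).2 h2⟩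

lemma exists_nat_mul_le_lt {c x : ℝ} (hc : 0 < c) (hx : 0 ≤ x) :
    ∃ m : ℕ, m * c ≤ x ∧ x < (m + 1) * c :=
  ⟨⌊x / c⌋₊, (le_div_iff₀ hc).1 (Nat.floor_le (div_nonneg hx hc.le)),
    (div_lt_iff₀ hc).1 (Nat.lt_floor_add_one _)⟩

lemma fract_div_mul_eq {c x : ℝ} (hc : 0 < c) {m : ℕ} (h1 : m * c ≤ x) (h2 : x < (m + 1) * c) :
    Int.fract (x / c) * c = x - m * c := by
  have hfloor : ⌊x / c⌋ = m := Int.floor_eq_iff.2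
    ⟨by rw [le_div_iff₀ hc]; push_cast; exact h1, by rw [div_lt_iff₀ hc]; push_cast; exact h2⟩
  rw [Int.fract, hfloor]
  field_simp
  push_cast
  ring

def residueLt (c r : ℝ) : Set ℝ := {y | Int.fract (y / c) * c < r}

lemma measurableSet_residueLt (c r : ℝ) : MeasurableSet (residueLt c r) :=
  measurableSet_lt (by fun_prop) measurable_const

lemma intervalIntegral_indicator_residueLt {c r : ℝ} (hc : 0 < c) (hr0 : 0 ≤ r) (hrc : r ≤ c)
    (t : ℝ) : ∫ y in t..t + c, (residueLt c r).indicator 1 y = r := by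
  have hper : Function.Periodic ((residueLt c r).indicator (1 : ℝ → ℝ)) c := fun y => by
    simp only [indicator_apply, residueLt, mem_ofPred_eq, Pi.one_apply, add_div, div_self hc.ne',
      Int.fract_add_one]
  have hbase : EqOn ((residueLt c r).indicator (1 : ℝ → ℝ)) ((Iio r).indicator 1) (Ico 0 c) :=
    fun y hy => by
      have := fract_div_mul_eq hc (m := 0) (by simpa using hy.1) (by simpa using hy.2)
      simp [indicator_apply, residueLt, this]
  rw [hper.intervalIntegral_add_eq t 0, zero_add, intervalIntegral.integral_of_le hc.le,
    ← integral_Ico_eq_integral_Ioc, setIntegral_congr_fun measurableSet_Ico hbase,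
    integral_indicator_one measurableSet_Iio, measureReal_restrict_apply measurableSet_Iio,
    inter_comm, Ico_inter_Iio, min_eq_right hrc, Real.volume_real_Ico_of_le hr0, sub_zero]

lemma intervalIntegrable_indicator_one {s : Set ℝ} (hs : MeasurableSet s) (a b : ℝ) :
    IntervalIntegrable (s.indicator (1 : ℝ → ℝ)) volume a b :=
  intervalIntegrable_iff.2 ((integrableOn_const measure_Ioc_lt_top.ne).indicator hs)

lemma intervalIntegral_const_add_indicator_residueLt {c r : ℝ} (hc : 0 < c) (hr0 : 0 ≤ r)
    (hrc : r ≤ c) (b t : ℝ) :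
    ∫ y in t..t + c, (b + (residueLt c r).indicator 1 y) = b * c + r := by
  rw [intervalIntegral.integral_add intervalIntegrable_const
      (intervalIntegrable_indicator_one (measurableSet_residueLt c r) _ _),
    intervalIntegral.integral_const, intervalIntegral_indicator_residueLt hc hr0 hrc,
    add_sub_cancel_left, smul_eq_mul, mul_comm]

noncomputable def linearWeight (n k : ℕ) : ℝ := ((n : ℝ) - k + 1) / ((n : ℝ) * (n + 1))

lemma linearWeight_succ_self (n : ℕ) : linearWeight n (n + 1) = 0 := by
  simp [linearWeight]

lemma stepSum_linearWeight_add_of_lt {c r x : ℝ} (hc : 0 < c) {n m : ℕ} (hn : 1 ≤ n)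
    (hr : r = 1 - n * c) (hrc : r < c) (hm : m ≤ n) (h1 : m * c < x) (h2 : x < m * c + r) :
    stepSum c n (linearWeight n) x + stepSum c n (linearWeight n) (1 - x) = 1 / (n + 1) := by
  -- `x` lies in the `(m+1)`-st interval and `1 - x` in the `(n-m+1)`-st.
  have hnm : ((n - m : ℕ) : ℝ) = n - m := Nat.cast_sub hm
  rw [stepSum_eq hc (linearWeight_succ_self n) hm h1 (by linarith),
    stepSum_eq hc (linearWeight_succ_self n) (Nat.sub_le n m) (by rw [hnm]; linarith)
      (by rw [hnm]; linarith)]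
  have : (n : ℝ) ≠ 0 := Nat.cast_ne_zero.2 (by omega)
  simp only [linearWeight]
  push_cast [hnm]
  field_simp
  ring

lemma stepSum_linearWeight_add_of_gt {c r x : ℝ} (hc : 0 < c) {n m : ℕ} (hr : r = 1 - n * c)
    (hr0 : 0 ≤ r) (hm : m < n) (h1 : m * c + r < x) (h2 : x < (m + 1) * c) :
    stepSum c n (linearWeight n) x + stepSum c n (linearWeight n) (1 - x) = 1 / n := by
  -- `x` lies in the `(m+1)`-st interval and `1 - x` in the `(n-m)`-th.
  have hnm : ((n - (m + 1) : ℕ) : ℝ) = n - (m + 1) := by push_cast [Nat.cast_sub hm]; ring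
  rw [stepSum_eq hc (linearWeight_succ_self n) hm.le (by linarith) h2,
    stepSum_eq hc (linearWeight_succ_self n) (Nat.sub_le n (m + 1)) (by rw [hnm]; linarith)
      (by rw [hnm]; linarith)]
  have : (n : ℝ) ≠ 0 := Nat.cast_ne_zero.2 (by omega)
  simp only [linearWeight]
  push_cast [hnm]
  field_simp
  ring

def shortIntervals (c r : ℝ) (n : ℕ) : Set ℝ :=
  Ico 0 r ∪ (⋃ k ∈ Finset.Ico 1 n, Ioo ((k : ℝ) * c) ((k : ℝ) * c + r)) ∪ Ioc ((n : ℝ) * c) 1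

lemma mem_shortIntervals_iff {c r x : ℝ} (hc : 0 < c) {n m : ℕ} (hr : r = 1 - n * c)
    (hrc : r < c) (hm : m ≤ n) (h1 : m * c < x) (h2 : x < (m + 1) * c)
    (hne : x ≠ m * c + r) :
    x ∈ shortIntervals c r n ↔ x < m * c + r := by
  have hfloor := natFloor_div_eq hc h1.le h2
  constructor
  · rintro ((⟨hx0, hxr⟩ | hx) | ⟨hnx, hx1⟩)
    · obtain rfl : m = 0 :=
        hfloor.symm.trans (natFloor_div_eq hc (by simpa using hx0) (by simp; linarith))
      simpa using hxr
    · simp only [mem_iUnion, Finset.mem_Ico] at hx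
      obtain ⟨k, -, hk1, hk2⟩ := hx
      obtain rfl : m = k := hfloor.symm.trans (natFloor_div_eq hc hk1.le (by linarith))
      exact hk2
    · obtain rfl : m = n := hfloor.symm.trans (natFloor_div_eq hc hnx.le (by linarith))
      exact lt_of_le_of_ne (by linarith) hne
  · intro hx
    rcases Nat.eq_zero_or_pos m with rfl | hm0
    · exact Or.inl (Or.inl ⟨by simpa using h1.le, by simpa using hx⟩)
    rcases hm.lt_or_eq with hmn | rfl
    · exact Or.inl (Or.inr (mem_biUnion (Finset.mem_Ico.2 ⟨hm0, hmn⟩) ⟨h1, hx⟩))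
    · exact Or.inr ⟨h1, by linarith⟩

lemma stepSum_linearWeight_profile {c r x : ℝ} (hc : 0 < c) {n : ℕ} (hn : 1 ≤ n)
    (hr : r = 1 - n * c) (hr0 : 0 ≤ r) (hrc : r < c) (hx : x ∈ Icc 0 1)
    (hbreak : ∀ m : ℕ, x ≠ m * c ∧ x ≠ m * c + r) :
    (x ∈ shortIntervals c r n ↔ x ∈ residueLt c r) ∧
    (stepSum c n (linearWeight n) x + stepSum c n (linearWeight n) (1 - x))⁻¹ =
      n + (residueLt c r).indicator 1 x := by
  obtain ⟨m, h1, h2⟩ := exists_nat_mul_le_lt hc hx.1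
  have hres : x ∈ residueLt c r ↔ x < m * c + r := by
    rw [residueLt, mem_ofPred_eq, fract_div_mul_eq hc h1 h2]
    constructor <;> intro <;> linarith
  replace h1 : m * c < x := h1.lt_of_ne (hbreak m).1.symm
  have hm : m ≤ n := by
    have : (m : ℝ) < n + 1 := lt_of_mul_lt_mul_right (by linarith [hx.2]) hc.le
    exact Nat.lt_succ_iff.1 (by exact_mod_cast this)
  refine ⟨(mem_shortIntervals_iff hc hr hrc hm h1 h2 (hbreak m).2).trans hres.symm, ?_⟩
  rcases (hbreak m).2.lt_or_gt with hshort | hlong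
  · rw [stepSum_linearWeight_add_of_lt hc hn hr hrc hm h1 hshort,
      indicator_of_mem (hres.2 hshort), Pi.one_apply, one_div, inv_inv]
  · have hmn : m < n := by
      have : (m : ℝ) < n := lt_of_mul_lt_mul_right (by linarith [hx.2]) hc.le
      exact_mod_cast this
    rw [stepSum_linearWeight_add_of_gt hc hr hr0 hmn hlong h2,
      indicator_of_notMem (fun h => (hres.1 h).not_gt hlong), one_div, inv_inv, add_zero]

theorem stmt11_general (c : ℝ) (hc0 : 0 < c) (n : ℕ) (hn : 1 ≤ n)
    (hlow : 1 / ((n : ℝ) + 1) < c) (hhigh : c ≤ 1 / (n : ℝ))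
    (r : ℝ) (hr : r = 1 - n * c)
    (q : ℕ → ℝ) (hq : ∀ k, q k = ((n : ℝ) - k + 1) / ((n : ℝ) * (n + 1)))
    (a : ℝ → ℝ)
    (ha : ∀ x, a x = ∑ k ∈ Finset.Icc 1 n, q k *
      ((Set.Icc (((k : ℝ) - 1) * c) (k * c)).indicator 1 x +
       (Set.Icc (1 - (k : ℝ) * c) (1 - ((k : ℝ) - 1) * c)).indicator 1 x))
    (B : Set ℝ)
    (hB : B = Set.Ico 0 r ∪ (⋃ k ∈ Finset.Ico 1 n, Set.Ioo ((k : ℝ) * c) ((k : ℝ) * c + r))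
        ∪ Set.Ioc ((n : ℝ) * c) 1) :
    (∀ᵐ x ∂(volume.restrict (Set.Icc (0:ℝ) 1)),
      (x ∈ B → a x = 1 / ((n : ℝ) + 1)) ∧ (x ∉ B → a x = 1 / (n : ℝ))) ∧
    ∀ t ∈ Set.Icc (0:ℝ) (1 - c), ∫ x in t..(t + c), (a x)⁻¹ = 1 := by
  obtain rfl : q = linearWeight n := funext hq
  replace hB : B = shortIntervals c r n := hB
  have hr0 : 0 ≤ r := by
    have := (le_div_iff₀ (Nat.cast_pos.2 hn)).1 hhigh
    linarith
  have hrc : r < c := by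
    have := (div_lt_iff₀ (by positivity : (0 : ℝ) < n + 1)).1 hlow
    linarith
  have hbreak : ∀ᵐ x, ∀ m : ℕ, x ≠ m * c ∧ x ≠ m * c + r :=
    ae_all_iff.2 fun m => (volume.ae_ne _).and (volume.ae_ne _)
  have hprofile (x : ℝ) (hx : x ∈ Icc 0 1) (hxb : ∀ m : ℕ, x ≠ m * c ∧ x ≠ m * c + r) :
      (x ∈ B ↔ x ∈ residueLt c r) ∧ (a x)⁻¹ = n + (residueLt c r).indicator 1 x := by
    rw [hB, ha, sum_indicator_add_reflect_eq_stepSum]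
    exact stepSum_linearWeight_profile hc0 hn hr hr0 hrc hx hxb
  refine ⟨?_, fun t ht => ?_⟩
  · filter_upwards [ae_restrict_of_ae hbreak, ae_restrict_mem measurableSet_Icc] with x hxb hx
    obtain ⟨hmem, hinv⟩ := hprofile x hx hxb
    rw [hmem, ← inv_inv (a x), hinv]
    constructor <;> intro h <;> simp [h]
  · have hsub : uIoc t (t + c) ⊆ Icc 0 1 := by
      rw [uIoc_of_le (by linarith)]
      exact fun x hx => ⟨by linarith [ht.1, hx.1], by linarith [ht.2, hx.2]⟩
    calc ∫ x in t..t + c, (a x)⁻¹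
        = ∫ x in t..t + c, ((n : ℝ) + (residueLt c r).indicator 1 x) := by
          refine intervalIntegral.integral_congr_ae ?_
          filter_upwards [hbreak] with x hxb hx
          exact (hprofile x (hsub hx) hxb).2
      _ = n * c + r := intervalIntegral_const_add_indicator_residueLt hc0 hr0 hrc.le _ t
      _ = 1 := by rw [hr]; ring

theorem stmt11 (c : ℝ) (hc0 : 0 < c) (hc1 : c ≤ 1) (n : ℕ) (hn : 1 ≤ n)
    (hlow : 1 / ((n : ℝ) + 1) < c) (hhigh : c ≤ 1 / (n : ℝ))
    (r : ℝ) (hr : r = 1 - n * c)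
    (q : ℕ → ℝ) (hq : ∀ k, q k = ((n : ℝ) - k + 1) / ((n : ℝ) * (n + 1)))
    (a : ℝ → ℝ)
    (ha : ∀ x, a x = ∑ k ∈ Finset.Icc 1 n, q k *
      ((Set.Icc (((k : ℝ) - 1) * c) (k * c)).indicator 1 x +
       (Set.Icc (1 - (k : ℝ) * c) (1 - ((k : ℝ) - 1) * c)).indicator 1 x))
    (B : Set ℝ)
    (hB : B = Set.Ico 0 r ∪ (⋃ k ∈ Finset.Ico 1 n, Set.Ioo ((k : ℝ) * c) ((k : ℝ) * c + r))
        ∪ Set.Ioc ((n : ℝ) * c) 1) :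
    (∀ᵐ x ∂(volume.restrict (Set.Icc (0:ℝ) 1)),
      (x ∈ B → a x = 1 / ((n : ℝ) + 1)) ∧ (x ∉ B → a x = 1 / (n : ℝ))) ∧
    ∀ t ∈ Set.Icc (0:ℝ) (1 - c), ∫ x in t..(t + c), (a x)⁻¹ = 1 :=
  stmt11_general c hc0 n hn hlow hhigh r hr q hq a ha B hB
end

section
/- Let G = C_{2n+1} be the odd cycle on vertices x₀,…,x_{2n} (indices modulo 2n+1) with probabilities p_k > 0, Σ p_k = 1, satisfying p_k + p_{k+1} ≤ 1/n for all k. For k = 0,…,2n let J_k = {x_{k+2}, x_{k+4}, …, x_{k+2n}} (indices mod 2n+1) and q_k = 1 − n(p_k + p_{k+1}). Then q_k ≥ 0, Σ_{k=0}^{2n} q_k = 1, and the convex combination a = Σ_k q_k 𝟙_{J_k} satisfies a(x_j) = n·p_j for every vertex x_j. -/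
lemma auxA (g : ℕ → ℝ) (n : ℕ) : ∑ i ∈ Finset.Icc 1 n, (g (2*i - 1) + g (2*i)) = ∑ m ∈ Finset.Icc 1 (2*n), g m := by
  induction n with
  | zero => simp
  | succ n ih =>
    rw [Finset.sum_Icc_succ_top (by omega : 1 ≤ n+1),
      show 2*(n+1) = 2*n+1+1 from by ring,
      Finset.sum_Icc_succ_top (by omega : 1 ≤ 2*n+1+1),
      Finset.sum_Icc_succ_top (by omega : 1 ≤ 2*n+1), ih,
      show 2*n+1+1-1 = 2*n+1 from rfl]
    ring

theorem stmt13 (n : ℕ) (hn : 1 ≤ n) (p : ZMod (2 * n + 1) → ℝ)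
    (hp : ∀ k, 0 < p k) (hsum : ∑ k, p k = 1)
    (hbd : ∀ k, p k + p (k + 1) ≤ 1 / (n : ℝ))
    (J : ZMod (2 * n + 1) → Finset (ZMod (2 * n + 1)))
    (hJ : ∀ k, J k = (Finset.Icc 1 n).image (fun i : ℕ => k + ((2 * i : ℕ) : ZMod (2 * n + 1))))
    (q : ZMod (2 * n + 1) → ℝ) (hq : ∀ k, q k = 1 - n * (p k + p (k + 1))) :
    (∀ k, 0 ≤ q k) ∧ (∑ k, q k = 1) ∧
    ∀ j, (∑ k, q k * (if j ∈ J k then (1:ℝ) else 0)) = n * p j := by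
  have hn0 : (0:ℝ) < n := by exact_mod_cast Nat.pos_of_ne_zero (by omega)
  have hq0 : ∀ k, 0 ≤ q k := by
    intro k
    have hb := (le_div_iff₀ hn0).mp (hbd k)
    rw [hq k]
    nlinarith
  have hsum' : ∑ k, p (k+1) = 1 := by
    rw [← hsum]
    exact Fintype.sum_bijective _ (Equiv.addRight (1 : ZMod (2*n+1))).bijective _ _ (fun k => rfl)
  have hcard : (Finset.univ : Finset (ZMod (2*n+1))).card = 2*n+1 := by
    simp [ZMod.card]
  refine ⟨hq0, ?_, ?_⟩
  · have : ∑ k, q k = ∑ k : ZMod (2*n+1), (1 - (n:ℝ) * (p k + p (k+1))) :=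
      Finset.sum_congr rfl (fun k _ => hq k)
    rw [this, Finset.sum_sub_distrib]
    simp only [← Finset.mul_sum, Finset.sum_add_distrib, hsum, hsum', Finset.sum_const, hcard,
      nsmul_eq_mul, mul_one]
    push_cast
    ring
  · intro j
    -- the set of k with j ∈ J k
    set S : Finset (ZMod (2*n+1)) :=
      (Finset.Icc 1 n).image (fun i : ℕ => j - ((2 * i : ℕ) : ZMod (2 * n + 1))) with hS
    have hmem : ∀ k, j ∈ J k ↔ k ∈ S := by
      intro k
      rw [hJ k, hS]
      simp only [Finset.mem_image]
      constructor
      · rintro ⟨i, hi, h⟩; exact ⟨i, hi, by rw [← h]; ring⟩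
      · rintro ⟨i, hi, h⟩; exact ⟨i, hi, by rw [← h]; ring⟩
    have step1 : (∑ k, q k * (if j ∈ J k then (1:ℝ) else 0)) = ∑ k ∈ S, q k := by
      rw [show (∑ k, q k * (if j ∈ J k then (1:ℝ) else 0))
          = ∑ k : ZMod (2*n+1), (if k ∈ S then q k else 0) from
        Finset.sum_congr rfl (fun k _ => by simp only [hmem k]; split <;> ring)]
      rw [Finset.sum_ite_mem, Finset.univ_inter]
    have hinj : ∀ a ∈ Finset.Icc 1 n, ∀ b ∈ Finset.Icc 1 n,
        j - ((2 * a : ℕ) : ZMod (2 * n + 1)) = j - ((2 * b : ℕ) : ZMod (2 * n + 1)) → a = b := by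
      intro a ha b hb h
      have h2 := sub_right_injective h
      have ha' : 2*a < 2*n+1 := by simp at ha; omega
      have hb' : 2*b < 2*n+1 := by simp at hb; omega
      have := congrArg ZMod.val h2
      rw [ZMod.val_natCast_of_lt ha', ZMod.val_natCast_of_lt hb'] at this
      omega
    have step2 : ∑ k ∈ S, q k = ∑ i ∈ Finset.Icc 1 n, q (j - ((2 * i : ℕ) : ZMod (2 * n + 1))) :=
      Finset.sum_image hinj
    -- rewrite each q term
    have key : ∀ i ∈ Finset.Icc 1 n, q (j - ((2 * i : ℕ) : ZMod (2 * n + 1)))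
        = 1 - (n:ℝ) * (p (j - ((2*i - 1 : ℕ) : ZMod (2*n+1))) + p (j - ((2*i : ℕ) : ZMod (2*n+1)))) := by
      intro i hi
      rw [hq]
      have h1 : j - ((2 * i : ℕ) : ZMod (2 * n + 1)) + 1 = j - ((2*i - 1 : ℕ) : ZMod (2*n+1)) := by
        have hi1 : 1 ≤ i := (Finset.mem_Icc.mp hi).1
        have h2 : ((2*i - 1 : ℕ) : ZMod (2*n+1)) = ((2*i : ℕ) : ZMod (2*n+1)) - 1 := by
          push_cast [Nat.cast_sub (by omega : 1 ≤ 2*i)]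
          ring
        rw [h2]; ring
      rw [h1]
      ring
    have step3 : ∑ i ∈ Finset.Icc 1 n, q (j - ((2 * i : ℕ) : ZMod (2 * n + 1)))
        = (n:ℝ) - n * ∑ i ∈ Finset.Icc 1 n,
            (p (j - ((2*i - 1 : ℕ) : ZMod (2*n+1))) + p (j - ((2*i : ℕ) : ZMod (2*n+1)))) := by
      rw [Finset.sum_congr rfl key, Finset.sum_sub_distrib, ← Finset.mul_sum, Finset.sum_const,
        Nat.card_Icc, show n+1-1 = n from rfl, nsmul_eq_mul, mul_one]
    have step4 : ∑ i ∈ Finset.Icc 1 n,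
        (p (j - ((2*i - 1 : ℕ) : ZMod (2*n+1))) + p (j - ((2*i : ℕ) : ZMod (2*n+1))))
        = ∑ m ∈ Finset.Icc 1 (2*n), p (j - (m : ZMod (2*n+1))) :=
      auxA (fun m => p (j - (m : ZMod (2*n+1)))) n
    have step5 : ∑ m ∈ Finset.Icc 1 (2*n), p (j - (m : ZMod (2*n+1))) = 1 - p j := by
      have hinj2 : ∀ a ∈ Finset.Icc 1 (2*n), ∀ b ∈ Finset.Icc 1 (2*n),
          j - ((a : ℕ) : ZMod (2 * n + 1)) = j - ((b : ℕ) : ZMod (2 * n + 1)) → a = b := by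
        intro a ha b hb h
        have h2 := sub_right_injective h
        have ha' : a < 2*n+1 := by simp at ha; omega
        have hb' : b < 2*n+1 := by simp at hb; omega
        have := congrArg ZMod.val h2
        rw [ZMod.val_natCast_of_lt ha', ZMod.val_natCast_of_lt hb'] at this
        omega
      have himg : (Finset.Icc 1 (2*n)).image (fun m : ℕ => j - (m : ZMod (2*n+1)))
          = Finset.univ.erase j := by
        apply Finset.eq_of_subset_of_card_le
        · intro x hx
          simp only [Finset.mem_image] at hx
          obtain ⟨m, hm, hx⟩ := hx
          simp only [Finset.mem_erase, Finset.mem_univ, and_true]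
          intro hxj
          rw [hxj] at hx
          have hm0 : ((m:ℕ) : ZMod (2*n+1)) = 0 := by linear_combination -hx
          have hm' : m < 2*n+1 := by simp at hm; omega
          have hv := congrArg ZMod.val hm0
          rw [ZMod.val_natCast_of_lt hm'] at hv
          simp only [ZMod.val_zero] at hv
          simp at hm
          omega
        · rw [Finset.card_erase_of_mem (Finset.mem_univ j), hcard,
            Finset.card_image_of_injOn hinj2, Nat.card_Icc]
      rw [← Finset.sum_image hinj2, himg, Finset.sum_erase_eq_sub (Finset.mem_univ j), hsum]
    rw [step1, step2, step3, step4, step5]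
    ring
end

section
/- Let G = C_{2n+1} be the odd cycle with vertex probabilities p_k > 0 summing to 1 and satisfying p_k + p_{k+1} ≤ 1/n for all k (indices mod 2n+1). Then the point a with a_{x_k} = n·p_k lies in the vertex-packing polytope VP(C_{2n+1}) (the convex hull of indicator vectors of independent sets), and Σ_k −p_k log(a_{x_k}) = H(π) − log n, where H(π) = Σ_k −p_k log p_k. -/
/-!
Lay intervals of lengths `a₀, a₁, …, a_{2n}` end to end on `[0, n)` and, for a threshold `t`,
select the vertices whose interval contains a point of `t + ℤ`. Two consecutive intervals have
total length `≤ 1`, so no two adjacent vertices are selected, and since the total length `n` is an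
integer this persists across the edge `2n — 0`. Averaging over `t ∈ [0, 1)` selects vertex `k`
with probability `a_k`; only the fractional parts of the partial sums matter as thresholds, so
the average is a finite convex combination. The entropy identity is `log (n p) = log n + log p`
summed against `p`.
-/

open Finset

section Floor

variable {R : Type*} [Field R] [LinearOrder R] [IsStrictOrderedRing R] [FloorRing R]

lemma Int.ceil_sub_eq_floor_add_ite {x t : R} (ht₀ : 0 ≤ t) (ht₁ : t < 1) :
    ⌈x - t⌉ = ⌊x⌋ + if t < Int.fract x then 1 else 0 := by
  rw [show x - t = (Int.fract x - t) + ⌊x⌋ by rw [Int.fract]; ring, Int.ceil_add_intCast, add_comm]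
  have := Int.fract_nonneg x
  have := Int.fract_lt_one x
  split_ifs
  · simp only [add_right_inj, Int.ceil_eq_iff]; constructor <;> push_cast <;> linarith
  · simp only [add_zero, add_eq_left, Int.ceil_eq_zero_iff]; constructor <;> linarith

lemma sum_range_sub_mul_ceil_sub {e : ℕ → R} {L j : ℕ} (he : Monotone e) (h₀ : e 0 = 0)
    (hL : e L = 1) (hlt : ∀ i < L, e i < 1) (hj : j < L) {x : R} (hx : Int.fract x = e j) :
    ∑ i ∈ range L, (e (i + 1) - e i) * ⌈x - e i⌉ = x := by
  have hterm : ∀ i ∈ range L, (e (i + 1) - e i) * ⌈x - e i⌉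
      = (e (i + 1) - e i) * ⌊x⌋ + if i < j then e (i + 1) - e i else 0 := by
    intro i hi
    rw [Int.ceil_sub_eq_floor_add_ite (h₀ ▸ he (Nat.zero_le i)) (hlt i (mem_range.1 hi)), hx]
    by_cases hij : i < j
    · rcases (he hij.le).lt_or_eq with h | h
      · simp only [h, hij, if_true, Int.cast_add, Int.cast_one]; ring
      · have : e (i + 1) = e i := le_antisymm (h ▸ he hij) (he i.le_succ)
        simp [this]
    · simp [hij, not_lt.2 (he (not_lt.1 hij))]
  rw [sum_congr rfl hterm, sum_add_distrib, ← sum_mul, sum_range_sub, hL, h₀, ← sum_filter]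
  have : (range L).filter (· < j) = range j := by ext i; simp only [mem_filter, mem_range]; omega
  rw [this, sum_range_sub, h₀, ← hx]
  linarith [Int.floor_add_fract x]

/-- A discrete form of `∫ t in 0..1, ⌈x - t⌉ = x`. -/
lemma exists_sum_mul_ceil_sub_eq (X : Finset R) :
    ∃ (L : ℕ) (w e : ℕ → R), (∀ i, 0 ≤ w i) ∧ ∑ i ∈ range L, w i = 1 ∧
      ∀ x ∈ X, ∑ i ∈ range L, w i * ⌈x - e i⌉ = x := by
  classical
  set S := insert 0 (X.image Int.fract)
  set f := S.orderEmbOfFin rfl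
  set e : ℕ → R := fun i => if h : i < #S then f ⟨i, h⟩ else 1
  have hS : ∀ s ∈ S, 0 ≤ s ∧ s < 1 := by
    simp only [S, mem_insert, mem_image]
    rintro s (rfl | ⟨x, -, rfl⟩)
    exacts [⟨le_rfl, one_pos⟩, ⟨Int.fract_nonneg x, Int.fract_lt_one x⟩]
  have hlt : ∀ i < #S, e i < 1 := fun i hi => by
    simpa [e, hi] using (hS _ (orderEmbOfFin_mem S rfl ⟨i, hi⟩)).2
  have he : Monotone e := by
    refine monotone_nat_of_le_succ fun i => ?_
    by_cases hi : i + 1 < #S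
    · simp only [e, hi, i.lt_succ_self.trans hi, dif_pos]
      exact f.monotone (Fin.mk_le_mk.2 i.le_succ)
    · by_cases hi' : i < #S
      · simpa [e, hi] using (hlt i hi').le
      · simp [e, hi, hi']
  have h₀ : e 0 = 0 := by
    have hpos : 0 < #S := card_pos.2 ⟨0, mem_insert_self _ _⟩
    simp only [e, f, hpos, dif_pos, orderEmbOfFin_zero]
    exact le_antisymm (min'_le S 0 (mem_insert_self _ _)) (hS _ (min'_mem _ _)).1
  have hL : e #S = 1 := dif_neg (lt_irrefl _)
  refine ⟨#S, fun i => e (i + 1) - e i, e, fun i => sub_nonneg.2 (he i.le_succ),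
    by rw [sum_range_sub, hL, h₀, sub_zero], fun x hx => ?_⟩
  obtain ⟨⟨j, hj⟩, hfj⟩ : Int.fract x ∈ Set.range f := by
    rw [range_orderEmbOfFin]; exact mem_insert_of_mem (mem_image_of_mem _ hx)
  exact sum_range_sub_mul_ceil_sub he h₀ hL hlt hj (by simp [e, hj, hfj])

end Floor

def cycleVertexPackingPolytope (m : ℕ) : Set (ZMod m → ℝ) :=
  convexHull ℝ {v | ∃ J : Finset (ZMod m), (∀ j ∈ J, j + 1 ∉ J) ∧
    v = fun j => if j ∈ J then 1 else 0}

section Cycle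

variable {m : ℕ} (a : ZMod m → ℝ)

def cumSum (k : ℕ) : ℝ := ∑ i ∈ range k, a i

lemma cumSum_succ (k : ℕ) : cumSum a (k + 1) = cumSum a k + a k := sum_range_succ _ _

/-- The number of points of `t + ℤ` in `[cumSum a k, cumSum a (k + 1))`. -/
noncomputable def crossings (t : ℝ) (k : ℕ) : ℤ := ⌈cumSum a (k + 1) - t⌉ - ⌈cumSum a k - t⌉

variable {a}

lemma crossings_nonneg (h₀ : ∀ k, 0 ≤ a k) (t : ℝ) (k : ℕ) : 0 ≤ crossings a t k := by
  rw [crossings, sub_nonneg, cumSum_succ]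
  exact Int.ceil_le_ceil (by linarith [h₀ k])

lemma crossings_add_crossings_succ_le (hedge : ∀ k, a k + a (k + 1) ≤ 1) (t : ℝ) (k : ℕ) :
    crossings a t k + crossings a t (k + 1) ≤ 1 := by
  have h : cumSum a (k + 1 + 1) - t ≤ (cumSum a k - t) + 1 := by
    rw [cumSum_succ, cumSum_succ]; push_cast; linarith [hedge k]
  have := (Int.ceil_le_ceil h).trans_eq (Int.ceil_add_one _)
  simp only [crossings]; omega

lemma crossings_eq_zero_or_one (h₀ : ∀ k, 0 ≤ a k) (hedge : ∀ k, a k + a (k + 1) ≤ 1)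
    (t : ℝ) (k : ℕ) : crossings a t k = 0 ∨ crossings a t k = 1 := by
  have := crossings_nonneg h₀ t k
  have := crossings_nonneg h₀ t (k + 1)
  have := crossings_add_crossings_succ_le hedge t k
  omega

variable [NeZero m]

lemma cumSum_add_period (k : ℕ) : cumSum a (k + m) = cumSum a k + ∑ j, a j := by
  have hm : cumSum a m = ∑ j, a j :=
    sum_nbij' (↑) ZMod.val (by simp) (fun j _ => mem_range.2 (ZMod.val_lt j))
      (fun i hi => ZMod.val_cast_of_lt (mem_range.1 hi)) (fun j _ => ZMod.natCast_zmod_val j)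
      (fun _ _ => rfl)
  simp only [cumSum, add_comm k, sum_range_add, Nat.cast_add, ZMod.natCast_self, zero_add] at hm ⊢
  rw [hm, add_comm]

lemma crossings_periodic {N : ℕ} (hsum : ∑ j, a j = N) (t : ℝ) :
    Function.Periodic (crossings a t) m := fun k => by
  simp only [crossings, add_right_comm k m 1, cumSum_add_period, hsum, add_sub_right_comm,
    Int.ceil_add_natCast]
  ring

lemma crossings_val_natCast {N : ℕ} (hsum : ∑ j, a j = N) (t : ℝ) (k : ℕ) :
    crossings a t (k : ZMod m).val = crossings a t k := by
  rw [ZMod.val_natCast]; exact (crossings_periodic hsum t).map_mod_nat k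

variable (a) in
noncomputable def roundedSet (t : ℝ) : Finset (ZMod m) :=
  univ.filter fun j => crossings a t j.val = 1

lemma roundedSet_independent {N : ℕ} (hedge : ∀ k, a k + a (k + 1) ≤ 1)
    (hsum : ∑ j, a j = N) (t : ℝ) : ∀ j ∈ roundedSet a t, j + 1 ∉ roundedSet a t := by
  intro j hj hj'
  simp only [roundedSet, mem_filter, mem_univ, true_and] at hj hj'
  rw [← ZMod.natCast_zmod_val j, ← Nat.cast_add_one, crossings_val_natCast hsum] at hj'
  have := crossings_add_crossings_succ_le hedge t j.val
  omega

theorem mem_cycleVertexPackingPolytope {N : ℕ} (h₀ : ∀ k, 0 ≤ a k)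
    (hedge : ∀ k, a k + a (k + 1) ≤ 1) (hsum : ∑ j, a j = N) :
    a ∈ cycleVertexPackingPolytope m := by
  classical
  obtain ⟨L, w, e, hw₀, hw₁, hw⟩ := exists_sum_mul_ceil_sub_eq ((range (m + 1)).image (cumSum a))
  have hcum : ∀ k ≤ m, cumSum a k ∈ (range (m + 1)).image (cumSum a) := fun k hk =>
    mem_image_of_mem _ (mem_range.2 (Nat.lt_succ_of_le hk))
  set v : ℕ → ZMod m → ℝ := fun i j => crossings a (e i) j.val
  have hv : ∀ i, v i = fun j => if j ∈ roundedSet a (e i) then 1 else 0 :=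
    fun i => funext fun j => by
      rcases crossings_eq_zero_or_one h₀ hedge (e i) j.val with h | h <;> simp [v, roundedSet, h]
  have ha : a = ∑ i ∈ range L, w i • v i := funext fun j => by
    have hj := (ZMod.val_lt j).le
    rw [Finset.sum_apply]
    simp only [Pi.smul_apply, smul_eq_mul, v, crossings, Int.cast_sub, mul_sub, sum_sub_distrib]
    rw [hw _ (hcum _ (Nat.succ_le_of_lt (ZMod.val_lt j))), hw _ (hcum _ hj), cumSum_succ,
      ZMod.natCast_zmod_val]
    ring
  rw [ha]
  exact (convex_convexHull ℝ _).sum_mem (fun i _ => hw₀ i) hw₁ fun i _ =>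
    subset_convexHull ℝ _ ⟨_, roundedSet_independent hedge hsum (e i), hv i⟩

end Cycle

lemma sum_neg_mul_log_const_mul {ι : Type*} [Fintype ι] {p : ι → ℝ} {c : ℝ} (hc : c ≠ 0)
    (hsum : ∑ i, p i = 1) :
    ∑ i, -p i * Real.log (c * p i) = (∑ i, -p i * Real.log (p i)) - Real.log c := by
  have hterm : ∀ i, -p i * Real.log (c * p i) = -p i * Real.log (p i) - Real.log c * p i := by
    intro i
    rcases eq_or_ne (p i) 0 with h | h
    · simp [h]
    · rw [Real.log_mul hc h]; ring
  simp only [hterm, sum_sub_distrib, ← mul_sum, hsum, mul_one]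

theorem stmt14 (n : ℕ) (hn : 1 ≤ n) (p : ZMod (2 * n + 1) → ℝ) (hp : ∀ k, 0 < p k)
    (hsum : ∑ k, p k = 1) (hbd : ∀ k, p k + p (k + 1) ≤ 1 / (n : ℝ))
    (a : ZMod (2 * n + 1) → ℝ) (ha : ∀ k, a k = n * p k) :
    a ∈ convexHull ℝ {v : ZMod (2 * n + 1) → ℝ |
        ∃ J : Finset (ZMod (2 * n + 1)), (∀ j ∈ J, j + 1 ∉ J) ∧
          v = fun j => if j ∈ J then 1 else 0} ∧
    ∑ k, -(p k) * Real.log (a k) = (∑ k, -(p k) * Real.log (p k)) - Real.log n := by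
  have hn₀ : (n : ℝ) ≠ 0 := Nat.cast_ne_zero.2 (by omega)
  obtain rfl : a = fun k => n * p k := funext ha
  have hedge : ∀ k, n * p k + n * p (k + 1) ≤ 1 := fun k => calc
    _ = n * (p k + p (k + 1)) := by ring
    _ ≤ n * (1 / n) := by gcongr; exact hbd k
    _ = 1 := mul_one_div_cancel hn₀
  have hnonneg : ∀ k, 0 ≤ n * p k := fun k => mul_nonneg n.cast_nonneg (hp k).le
  have htotal : ∑ k, n * p k = n := by rw [← mul_sum, hsum, mul_one]
  exact ⟨mem_cycleVertexPackingPolytope hnonneg hedge htotal, sum_neg_mul_log_const_mul hn₀ hsum⟩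
end
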